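/- Let K be the field of fractions of ℚ[x₀,x₁,x₂,x₃,x₄,x₅] and define maps τ'₁, τ'₂, τ'₃ on K⁶ by: τ'₁ replaces (v₀,v₁) by ((v₂v₄+v₃v₅)/v₁, (v₂v₄+v₃v₅)/v₀); τ'₂ replaces (v₂,v₃) by ((v₁v₄+v₀v₅)/v₃, (v₁v₄+v₀v₅)/v₂); τ'₃ replaces (v₄,v₅) by ((v₀v₂+v₁v₃)/v₅, (v₀v₂+v₁v₃)/v₄); each fixes the remaining entries. Let X = (x₀,…,x₅). Then for all i ≠ j in {1,2,3}, (τ'ᵢ ∘ τ'ⱼ)³(X) = X; that is, applying the six maps τ'ⱼ, τ'ᵢ, τ'ⱼ, τ'ᵢ, τ'ⱼ, τ'ᵢ in succession to X returns X. -/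
import Mathlib


noncomputable section

/-- The polynomial ring ℚ[x₀,…,x₅]. -/
abbrev P : Type := MvPolynomial (Fin 6) ℚ

/-- K = Frac(ℚ[x₀,…,x₅]). -/
abbrev K : Type := FractionRing P

/-- The images of the variables x₀,…,x₅ in K. -/
def x (i : Fin 6) : K := algebraMap P K (MvPolynomial.X i)

/-- τ'₁ : replaces (v₀, v₁) by ((v₂v₄+v₃v₅)/v₁, (v₂v₄+v₃v₅)/v₀). -/
def tau1 (v : Fin 6 → K) : Fin 6 → K := fun k =>
  if k = 0 then (v 2 * v 4 + v 3 * v 5) / v 1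
  else if k = 1 then (v 2 * v 4 + v 3 * v 5) / v 0
  else v k

/-- τ'₂ : replaces (v₂, v₃) by ((v₁v₄+v₀v₅)/v₃, (v₁v₄+v₀v₅)/v₂). -/
def tau2 (v : Fin 6 → K) : Fin 6 → K := fun k =>
  if k = 2 then (v 1 * v 4 + v 0 * v 5) / v 3
  else if k = 3 then (v 1 * v 4 + v 0 * v 5) / v 2
  else v k

/-- τ'₃ : replaces (v₄, v₅) by ((v₀v₂+v₁v₃)/v₅, (v₀v₂+v₁v₃)/v₄). -/
def tau3 (v : Fin 6 → K) : Fin 6 → K := fun k =>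
  if k = 4 then (v 0 * v 2 + v 1 * v 3) / v 5
  else if k = 5 then (v 0 * v 2 + v 1 * v 3) / v 4
  else v k

/-- τ' indexed by Fin 3: `tau i` is τ'_{i+1}. -/
def tau : Fin 3 → (Fin 6 → K) → (Fin 6 → K)
  | 0 => tau1
  | 1 => tau2
  | 2 => tau3

/-- The initial labeled seed X = (x₀,…,x₅). -/
def X0 : Fin 6 → K := x

/-- Apply the maps τ'₍a₁₎, …, τ'₍aₙ₎ along the word `w` in left-to-right order. -/
def applyWord (w : List (Fin 3)) (v : Fin 6 → K) : Fin 6 → K :=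
  w.foldl (fun u a => tau a u) v

/-- A = (x₂x₄+x₃x₅)/(x₀x₁). -/
def A : K := (x 2 * x 4 + x 3 * x 5) / (x 0 * x 1)

/-- B = (x₁x₄+x₀x₅)/(x₂x₃). -/
def B : K := (x 1 * x 4 + x 0 * x 5) / (x 2 * x 3)

/-- C = (x₀x₂+x₁x₃)/(x₄x₅). -/
def C : K := (x 0 * x 2 + x 1 * x 3) / (x 4 * x 5)

lemma hx (i : Fin 6) : x i ≠ 0 := by
  have h : (MvPolynomial.X i : P) ≠ 0 := MvPolynomial.X_ne_zero i
  simp only [x]; exact (map_ne_zero_iff _ (IsFractionRing.injective P K)).mpr h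

lemma poly_ne (p : P) (h : MvPolynomial.eval (fun _ => (1:ℚ)) p ≠ 0) :
    algebraMap P K p ≠ 0 := by
  refine (map_ne_zero_iff _ (IsFractionRing.injective P K)).mpr ?_
  intro hp; exact h (by simp [hp])

lemma numA_ne : x 2 * x 4 + x 3 * x 5 ≠ 0 := by
  have : x 2 * x 4 + x 3 * x 5 =
      algebraMap P K (MvPolynomial.X 2 * MvPolynomial.X 4 +
        MvPolynomial.X 3 * MvPolynomial.X 5) := by simp [x]
  rw [this]; exact poly_ne _ (by simp)

lemma numB_ne : x 1 * x 4 + x 0 * x 5 ≠ 0 := by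
  have : x 1 * x 4 + x 0 * x 5 =
      algebraMap P K (MvPolynomial.X 1 * MvPolynomial.X 4 +
        MvPolynomial.X 0 * MvPolynomial.X 5) := by simp [x]
  rw [this]; exact poly_ne _ (by simp)

lemma numC_ne : x 0 * x 2 + x 1 * x 3 ≠ 0 := by
  have : x 0 * x 2 + x 1 * x 3 =
      algebraMap P K (MvPolynomial.X 0 * MvPolynomial.X 2 +
        MvPolynomial.X 1 * MvPolynomial.X 3) := by simp [x]
  rw [this]; exact poly_ne _ (by simp)

lemma hA : A ≠ 0 := div_ne_zero numA_ne (mul_ne_zero (hx 0) (hx 1))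
lemma hB : B ≠ 0 := div_ne_zero numB_ne (mul_ne_zero (hx 2) (hx 3))
lemma hC : C ≠ 0 := div_ne_zero numC_ne (mul_ne_zero (hx 4) (hx 5))

/-- A scaled seed: (p x₀, p x₁, q x₂, q x₃, r x₄, r x₅). -/
def V (p q r : K) : Fin 6 → K := ![p * x 0, p * x 1, q * x 2, q * x 3, r * x 4, r * x 5]

lemma vec0 (a b c d e f : K) : ![a,b,c,d,e,f] 0 = a := rfl
lemma vec1 (a b c d e f : K) : ![a,b,c,d,e,f] 1 = b := rfl
lemma vec2 (a b c d e f : K) : ![a,b,c,d,e,f] 2 = c := rfl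
lemma vec3 (a b c d e f : K) : ![a,b,c,d,e,f] 3 = d := rfl
lemma vec4 (a b c d e f : K) : ![a,b,c,d,e,f] 4 = e := rfl
lemma vec5 (a b c d e f : K) : ![a,b,c,d,e,f] 5 = f := rfl

lemma fv2 : ((3:Fin 6):ℕ) = 3 := rfl
lemma fv3 : ((2:Fin 6):ℕ) = 2 := rfl
lemma fv4 : ((4:Fin 6):ℕ) = 4 := rfl
lemma fv5 : ((5:Fin 6):ℕ) = 5 := rfl

lemma X0_eq : X0 = V 1 1 1 := by
  funext k; fin_cases k <;>
    simp [X0, V, vec0, vec1, vec2, vec3, vec4, vec5]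

lemma tau1_V (p q r p' : K) (hp : p ≠ 0) (h : p' = q * r * A / p) :
    tau1 (V p q r) = V p' q r := by
  subst h
  funext k; fin_cases k <;>
    simp only [tau1, V, A, vec0, vec1, vec2, vec3, vec4, vec5] <;>
    norm_num [Fin.ext_iff, fv2, fv3, fv4, fv5] <;>
    field_simp [hx 0, hx 1] <;> ring

lemma tau2_V (p q r q' : K) (hq : q ≠ 0) (h : q' = p * r * B / q) :
    tau2 (V p q r) = V p q' r := by
  subst h
  funext k; fin_cases k <;>
    simp only [tau2, V, B, vec0, vec1, vec2, vec3, vec4, vec5] <;>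
    norm_num [Fin.ext_iff, fv2, fv3, fv4, fv5] <;>
    field_simp [hx 2, hx 3] <;> ring

lemma tau3_V (p q r r' : K) (hr : r ≠ 0) (h : r' = p * q * C / r) :
    tau3 (V p q r) = V p q r' := by
  subst h
  funext k; fin_cases k <;>
    simp only [tau3, V, C, vec0, vec1, vec2, vec3, vec4, vec5] <;>
    norm_num [Fin.ext_iff, fv2, fv3, fv4, fv5] <;>
    field_simp [hx 4, hx 5] <;> ring

/-- The braid-type relation (τ'ᵢ ∘ τ'ⱼ)³(X) = X for i ≠ j. -/
theorem tau_braid : ∀ i j : Fin 3, i ≠ j →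
    tau i (tau j (tau i (tau j (tau i (tau j X0))))) = X0 := by
  have hA := hA; have hB := hB; have hC := hC
  intro i j hij
  fin_cases i <;> fin_cases j <;> simp only [tau]
  · exact absurd rfl hij
  · -- i = τ1, j = τ2
    rw [X0_eq,
      tau2_V 1 1 1 B one_ne_zero (by field_simp),
      tau1_V 1 B 1 (A*B) one_ne_zero (by field_simp; try ring),
      tau2_V (A*B) B 1 (A*B) hB (by field_simp; try ring),
      tau1_V (A*B) (A*B) 1 A (mul_ne_zero hA hB) (by field_simp; try ring),
      tau2_V A (A*B) 1 1 (mul_ne_zero hA hB) (by field_simp; try ring),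
      tau1_V A 1 1 1 hA (by field_simp)]
  · -- i = τ1, j = τ3
    rw [X0_eq,
      tau3_V 1 1 1 C one_ne_zero (by field_simp),
      tau1_V 1 1 C (A*C) one_ne_zero (by field_simp; try ring),
      tau3_V (A*C) 1 C (A*C) hC (by field_simp; try ring),
      tau1_V (A*C) 1 (A*C) A (mul_ne_zero hA hC) (by field_simp; try ring),
      tau3_V A 1 (A*C) 1 (mul_ne_zero hA hC) (by field_simp; try ring),
      tau1_V A 1 1 1 hA (by field_simp)]
  · -- i = τ2, j = τ1
    rw [X0_eq,
      tau1_V 1 1 1 A one_ne_zero (by field_simp),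
      tau2_V A 1 1 (A*B) one_ne_zero (by field_simp; try ring),
      tau1_V A (A*B) 1 (A*B) hA (by field_simp; try ring),
      tau2_V (A*B) (A*B) 1 B (mul_ne_zero hA hB) (by field_simp; try ring),
      tau1_V (A*B) B 1 1 (mul_ne_zero hA hB) (by field_simp; try ring),
      tau2_V 1 B 1 1 hB (by field_simp)]
  · exact absurd rfl hij
  · -- i = τ2, j = τ3
    rw [X0_eq,
      tau3_V 1 1 1 C one_ne_zero (by field_simp),
      tau2_V 1 1 C (B*C) one_ne_zero (by field_simp; try ring),
      tau3_V 1 (B*C) C (B*C) hC (by field_simp; try ring),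
      tau2_V 1 (B*C) (B*C) B (mul_ne_zero hB hC) (by field_simp; try ring),
      tau3_V 1 B (B*C) 1 (mul_ne_zero hB hC) (by field_simp; try ring),
      tau2_V 1 B 1 1 hB (by field_simp)]
  · -- i = τ3, j = τ1
    rw [X0_eq,
      tau1_V 1 1 1 A one_ne_zero (by field_simp),
      tau3_V A 1 1 (A*C) one_ne_zero (by field_simp; try ring),
      tau1_V A 1 (A*C) (A*C) hA (by field_simp; try ring),
      tau3_V (A*C) 1 (A*C) C (mul_ne_zero hA hC) (by field_simp; try ring),
      tau1_V (A*C) 1 C 1 (mul_ne_zero hA hC) (by field_simp; try ring),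
      tau3_V 1 1 C 1 hC (by field_simp)]
  · -- i = τ3, j = τ2
    rw [X0_eq,
      tau2_V 1 1 1 B one_ne_zero (by field_simp),
      tau3_V 1 B 1 (B*C) one_ne_zero (by field_simp; try ring),
      tau2_V 1 B (B*C) (B*C) hB (by field_simp; try ring),
      tau3_V 1 (B*C) (B*C) C (mul_ne_zero hB hC) (by field_simp; try ring),
      tau2_V 1 (B*C) C 1 (mul_ne_zero hB hC) (by field_simp; try ring),
      tau3_V 1 1 C 1 hC (by field_simp)]
  · exact absurd rfl hij
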